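/- Let X and Y be set-valued mappings whose conditional cores with respect to a sub-σ-algebra H exist. Then m(X|H) + m(Y|H) ⊆ m(X+Y|H) almost surely (subadditivity of the conditional core for reverse inclusion). Moreover, if η is an H-measurable random element and X is a random closed set, then m(X + {η} | H) = m(X|H) + η almost surely. -/

import Mathlib

/-!
Translation by an `H`-measurable `η` maps `H`-measurable random sets to `H`-measurable ones in
both directions, so it commutes with taking the core, and uniqueness of the core gives
`m(X + {η} | H) = m(X | H) + η`.

For subadditivity the difficulty is that `m(X|H) + m(Y|H)` need not be `H`-measurable. Every
`H ⊗ 𝓑(X)`-measurable set is already measurable for a countably generated sub-σ-algebra of `H`,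
so the three cores factor through a single `H`-measurable map `φ` into a Polish space `K`, and
the set of `(k, a, b)` with `a ∈ Z_X k`, `b ∈ Z_Y k`, `a + b ∉ Z_S k` is Borel in `K × X × X`.
Its projection to `K` is analytic, and by the capacitability argument on Baire space its outer
measure is approximated by the projections of compact subsets. The image of such a compact set
under `(k, a, b) ↦ (k, a + b)` is compact, hence an `H`-measurable random set inside `X + Y`, so
it lies in `m(X + Y | H)` almost surely, which forces its projection to be null.
-/

open MeasureTheory Pointwise

/-- `Z` is the conditional core of the set-valued map `C` with respect to `mH`: the largest
`mH`-measurable random set a.s. contained in `C` (no closedness required). -/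
def IsCondCoreGen {Ω X : Type*} [MeasurableSpace X] (mF mH : MeasurableSpace Ω)
    (P : @MeasureTheory.Measure Ω mF) (C Z : Ω → Set X) : Prop :=
  MeasurableSet[mH.prod (inferInstance : MeasurableSpace X)] {p : Ω × X | p.2 ∈ Z p.1} ∧
  (∀ᵐ ω ∂P, Z ω ⊆ C ω) ∧
  ∀ W : Ω → Set X,
    MeasurableSet[mH.prod (inferInstance : MeasurableSpace X)] {p : Ω × X | p.2 ∈ W p.1} →
    (∀ᵐ ω ∂P, W ω ⊆ C ω) → ∀ᵐ ω ∂P, W ω ⊆ Z ω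

open Set Filter Topology
open scoped ENNReal

section Capacity

lemma exists_measure_iUnion_le_add {α : Type*} [MeasurableSpace α] (μ : Measure α)
    {s : ℕ → Set α} (hs : Monotone s) (hfin : μ (⋃ t, s t) ≠ ∞) {δ : ℝ≥0∞} (hδ : δ ≠ 0) :
    ∃ t, μ (⋃ t, s t) ≤ μ (s t) + δ := by
  by_contra! h
  have : μ (⋃ t, s t) + δ ≤ μ (⋃ t, s t) := by
    conv_lhs => rw [hs.measure_iUnion, ENNReal.iSup_add]
    exact iSup_le fun t => (h t).le
  exact (ENNReal.lt_add_right hfin hδ).not_ge this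

lemma exists_bound_measure_image_le {α : Type*} [MeasurableSpace α] (μ : Measure α)
    [IsFiniteMeasure μ] (f : (ℕ → ℕ) → α) {ε : ℝ≥0∞} (hε : ε ≠ 0) :
    ∃ σ : ℕ → ℕ, ∀ n, μ (range f) ≤ μ (f '' {x | ∀ i < n, x i ≤ σ i}) + ε := by
  obtain ⟨δ, hδ, hδε⟩ := ENNReal.exists_pos_sum_of_countable hε ℕ
  have step : ∀ (A : Set (ℕ → ℕ)) (n : ℕ),
      ∃ t, μ (f '' A) ≤ μ (f '' (A ∩ {x | x n ≤ t})) + δ n := by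
    intro A n
    have hU : ⋃ t, f '' (A ∩ {x | x n ≤ t}) = f '' A := by
      rw [← image_iUnion, ← inter_iUnion,
        iUnion_eq_univ_iff.2 fun x => ⟨x n, le_refl (x n)⟩, inter_univ]
    have hmono : Monotone fun t => f '' (A ∩ {x | x n ≤ t}) := fun a b hab =>
      image_mono (inter_subset_inter_right _ fun x hx => le_trans hx hab)
    simpa only [hU] using exists_measure_iUnion_le_add μ hmono (hU ▸ measure_ne_top _ _)
      (by exact_mod_cast (hδ n).ne')
  choose t ht using step
  let A : ℕ → Set (ℕ → ℕ) := fun n => Nat.rec univ (fun n An => An ∩ {x | x n ≤ t An n}) n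
  have hA : ∀ n, A n = {x | ∀ i < n, x i ≤ t (A i) i} := by
    intro n
    induction n with
    | zero => simp [A]
    | succ n ih =>
      change A n ∩ _ = _
      rw [ih]
      ext x
      simp only [mem_inter_iff, mem_ofPred_eq, Nat.forall_lt_succ_right]
      rfl
  have hsum : ∀ n, μ (range f) ≤ μ (f '' A n) + ∑ i ∈ Finset.range n, (δ i : ℝ≥0∞) := by
    intro n
    induction n with
    | zero => simp [A]
    | succ n ih =>
      calc μ (range f) ≤ μ (f '' A n) + ∑ i ∈ Finset.range n, (δ i : ℝ≥0∞) := ih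
        _ ≤ μ (f '' A (n + 1)) + δ n + ∑ i ∈ Finset.range n, (δ i : ℝ≥0∞) := by
          gcongr; exact ht (A n) n
        _ = μ (f '' A (n + 1)) + ∑ i ∈ Finset.range (n + 1), (δ i : ℝ≥0∞) := by
          rw [Finset.sum_range_succ]; ring
  refine ⟨fun i => t (A i) i, fun n => ?_⟩
  rw [← hA]
  exact (hsum n).trans (by gcongr; exact (ENNReal.sum_le_tsum _).trans hδε.le)

lemma exists_tendsto_subseq_of_forall_lt_le (x : ℕ → ℕ → ℕ) (σ : ℕ → ℕ)
    (hx : ∀ n, ∀ i < n, x n i ≤ σ i) :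
    ∃ y : ℕ → ℕ, (∀ i, y i ≤ σ i) ∧ ∃ ψ : ℕ → ℕ, StrictMono ψ ∧ Tendsto (x ∘ ψ) atTop (𝓝 y) := by
  let b : ℕ → ℕ := fun i => max (σ i) ((Finset.range (i + 1)).sup fun m => x m i)
  have hxb : ∀ n, x n ∈ univ.pi fun i => Iic (b i) := by
    intro n i _
    rcases lt_or_ge i n with h | h
    · exact le_max_of_le_left (hx n i h)
    · exact le_max_of_le_right (Finset.le_sup (f := fun m => x m i) (by simpa using h))
  obtain ⟨y, -, ψ, hψ, hlim⟩ :=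
    (isCompact_univ_pi fun i => (finite_Iic (b i)).isCompact).tendsto_subseq hxb
  refine ⟨y, fun i => ?_, ψ, hψ, hlim⟩
  refine le_of_tendsto (((continuous_apply i).tendsto y).comp hlim) ?_
  filter_upwards [eventually_gt_atTop i] with j hj
  exact hx (ψ j) i (hj.trans_le hψ.le_apply)

variable {K : Type*} [TopologicalSpace K]

lemma iInter_closure_image_subset [T2Space K] [FirstCountableTopology K]
    {f : (ℕ → ℕ) → K} (hf : Continuous f) (σ : ℕ → ℕ) :
    ⋂ n, closure (f '' {x | ∀ i < n, x i ≤ σ i}) ⊆ f '' {x | ∀ i, x i ≤ σ i} := by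
  intro k hk
  obtain ⟨u, hu⟩ := (𝓝 k).exists_antitone_basis
  have : ∀ n, ∃ x : ℕ → ℕ, (∀ i < n, x i ≤ σ i) ∧ f x ∈ u n := fun n => by
    obtain ⟨_, hku, x, hx, rfl⟩ := mem_closure_iff_nhds.1 (mem_iInter.1 hk n) _ (hu.mem n)
    exact ⟨x, hx, hku⟩
  choose x hx hxu using this
  obtain ⟨y, hy, ψ, hψ, hlim⟩ := exists_tendsto_subseq_of_forall_lt_le x σ hx
  exact ⟨y, hy, tendsto_nhds_unique ((hf.tendsto y).comp hlim)
    ((hu.tendsto hxu).comp hψ.tendsto_atTop)⟩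

variable [MeasurableSpace K] (μ : Measure K)

lemma exists_isCompact_measure_range_le [T2Space K] [FirstCountableTopology K]
    [OpensMeasurableSpace K] [IsFiniteMeasure μ] {f : (ℕ → ℕ) → K} (hf : Continuous f)
    {ε : ℝ≥0∞} (hε : ε ≠ 0) : ∃ L, IsCompact L ∧ μ (range f) ≤ μ (f '' L) + ε := by
  obtain ⟨σ, hσ⟩ := exists_bound_measure_image_le μ f hε
  have hL : {x : ℕ → ℕ | ∀ i, x i ≤ σ i} = univ.pi fun i => Iic (σ i) := by ext; simp [Pi.le_def]
  refine ⟨_, hL ▸ isCompact_univ_pi fun i => (finite_Iic (σ i)).isCompact, ?_⟩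
  have hanti : Antitone fun n => closure (f '' {x | ∀ i < n, x i ≤ σ i}) := fun m n hmn =>
    closure_mono (image_mono fun x hx i hi => hx i (hi.trans_le hmn))
  calc μ (range f) ≤ (⨅ n, μ (closure (f '' {x | ∀ i < n, x i ≤ σ i}))) + ε := by
        rw [ENNReal.iInf_add]
        exact le_iInf fun n => (hσ n).trans (by gcongr; exact subset_closure)
    _ = μ (⋂ n, closure (f '' {x | ∀ i < n, x i ≤ σ i})) + ε := by
        rw [hanti.measure_iInter (fun n => isClosed_closure.measurableSet.nullMeasurableSet)
          ⟨0, measure_ne_top _ _⟩]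
    _ ≤ μ (f '' {x | ∀ i, x i ≤ σ i}) + ε := by
        gcongr; exact iInter_closure_image_subset hf σ

lemma MeasureTheory.AnalyticSet.exists_isCompact_subset_measure_image_le [T2Space K]
    [FirstCountableTopology K] [OpensMeasurableSpace K] [IsFiniteMeasure μ] {α : Type*}
    [TopologicalSpace α] {A : Set α} (hA : AnalyticSet A) {g : α → K} (hg : Continuous g)
    {ε : ℝ≥0∞} (hε : ε ≠ 0) : ∃ C ⊆ A, IsCompact C ∧ μ (g '' A) ≤ μ (g '' C) + ε := by
  rw [AnalyticSet] at hA
  rcases hA with rfl | ⟨f, hf, rfl⟩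
  · exact ⟨∅, subset_rfl, isCompact_empty, by simp⟩
  · obtain ⟨L, hL, hle⟩ := exists_isCompact_measure_range_le μ (hg.comp hf) hε
    refine ⟨f '' L, image_subset_range _ _, hL.image hf, ?_⟩
    rwa [← range_comp, image_image]

end Capacity

section Factorization

variable {Ω X : Type*} [MeasurableSpace X]

lemma MeasurableSpace.prod_mono_left {m₁ m₂ : MeasurableSpace Ω} (h : m₁ ≤ m₂) :
    m₁.prod (inferInstance : MeasurableSpace X) ≤ m₂.prod inferInstance :=
  sup_le_sup (MeasurableSpace.comap_mono h) le_rfl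

lemma exists_countable_measurableSet_generateFrom_prod {mH : MeasurableSpace Ω}
    {S : Set (Ω × X)} (hS : MeasurableSet[mH.prod inferInstance] S) :
    ∃ b : Set (Set Ω), b.Countable ∧ (∀ s ∈ b, MeasurableSet[mH] s) ∧
      MeasurableSet[(MeasurableSpace.generateFrom b).prod inferInstance] S := by
  replace hS := MeasurableSpace.measurableSet_sup.1 hS
  induction hS with
  | basic s hs =>
    rcases hs with ⟨A, hA, rfl⟩ | ⟨B, hB, rfl⟩
    · exact ⟨{A}, countable_singleton A, by simpa using hA,
        measurable_fst (MeasurableSpace.measurableSet_generateFrom rfl)⟩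
    · exact ⟨∅, countable_empty, by simp, @measurable_snd Ω X (.generateFrom ∅) _ B hB⟩
  | empty => exact ⟨∅, countable_empty, by simp, @MeasurableSet.empty _ (.prod _ _)⟩
  | compl s _ ih =>
    obtain ⟨b, hb, hbH, hs⟩ := ih
    exact ⟨b, hb, hbH, hs.compl⟩
  | iUnion f _ ih =>
    choose b hb hbH hf using ih
    refine ⟨⋃ n, b n, countable_iUnion hb,
      fun s hs => (mem_iUnion.1 hs).elim fun n => hbH n s, MeasurableSet.iUnion fun n => ?_⟩
    exact MeasurableSpace.prod_mono_left
      (MeasurableSpace.generateFrom_mono (subset_iUnion b n)) _ (hf n)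

noncomputable def indicatorVector (b : Set (Set Ω)) (ω : Ω) : b → ℕ :=
  fun s => (s : Set Ω).indicator 1 ω

lemma measurable_indicatorVector {m : MeasurableSpace Ω} {b : Set (Set Ω)}
    (hb : ∀ s ∈ b, MeasurableSet[m] s) : Measurable[m] (indicatorVector b) :=
  measurable_pi_lambda _ fun s => measurable_const.indicator (hb s s.2)

lemma generateFrom_le_comap_indicatorVector (b : Set (Set Ω)) :
    MeasurableSpace.generateFrom b ≤ MeasurableSpace.comap (indicatorVector b) inferInstance := by
  refine MeasurableSpace.generateFrom_le fun s hs => ⟨{g | g ⟨s, hs⟩ = 1},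
    measurable_pi_apply _ (measurableSet_singleton 1), ?_⟩
  ext ω
  by_cases h : ω ∈ s <;> simp [indicatorVector, h]

lemma exists_measurableSet_eq_preimage_indicatorVector {b : Set (Set Ω)} {Z : Ω → Set X}
    (hZ : MeasurableSet[(MeasurableSpace.generateFrom b).prod inferInstance]
      {p : Ω × X | p.2 ∈ Z p.1}) :
    ∃ G : Set ((b → ℕ) × X), MeasurableSet G ∧ ∀ ω, Z ω = Prod.mk (indicatorVector b ω) ⁻¹' G := by
  have := MeasurableSpace.prod_mono_left (generateFrom_le_comap_indicatorVector b) _ hZ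
  rw [← MeasurableSpace.comap_id (m := (inferInstance : MeasurableSpace X)),
    ← MeasurableSpace.comap_prodMap] at this
  obtain ⟨G, hG, hpre⟩ := this
  exact ⟨G, hG, fun ω => by ext x; simpa using (Set.ext_iff.1 hpre (ω, x)).symm⟩

end Factorization

lemma ae_prodMk_preimage_add_subset {Ω K X : Type*} {mΩ : MeasurableSpace Ω}
    [TopologicalSpace K] [PolishSpace K] [MeasurableSpace K] [BorelSpace K]
    [TopologicalSpace X] [PolishSpace X] [MeasurableSpace X] [BorelSpace X] [Add X]
    [ContinuousAdd X] (P : Measure Ω) [IsFiniteMeasure P] {φ : Ω → K} (hφ : Measurable φ)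
    {G₁ G₂ G₃ : Set (K × X)} (hG₁ : MeasurableSet G₁) (hG₂ : MeasurableSet G₂)
    (hG₃ : MeasurableSet G₃)
    (h : ∀ C : Set (K × X), IsCompact C →
      (∀ k, Prod.mk k ⁻¹' C ⊆ Prod.mk k ⁻¹' G₁ + Prod.mk k ⁻¹' G₂) →
      ∀ᵐ ω ∂P, Prod.mk (φ ω) ⁻¹' C ⊆ Prod.mk (φ ω) ⁻¹' G₃) :
    ∀ᵐ ω ∂P, Prod.mk (φ ω) ⁻¹' G₁ + Prod.mk (φ ω) ⁻¹' G₂ ⊆ Prod.mk (φ ω) ⁻¹' G₃ := by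
  let B : Set (K × X × X) := {q | (q.1, q.2.1) ∈ G₁ ∧ (q.1, q.2.2) ∈ G₂ ∧ (q.1, q.2.1 + q.2.2) ∉ G₃}
  have hB : MeasurableSet B :=
    (measurable_fst.prodMk measurable_snd.fst hG₁).inter
      ((measurable_fst.prodMk measurable_snd.snd hG₂).inter
        (measurable_fst.prodMk (measurable_snd.fst.add measurable_snd.snd) hG₃).compl)
  let sum : K × X × X → K × X := fun q => (q.1, q.2.1 + q.2.2)
  have hsum : Continuous sum := by fun_prop
  suffices hnull : P.map φ (Prod.fst '' B) = 0 by
    filter_upwards [ae_of_ae_map hφ.aemeasurable (measure_eq_zero_iff_ae_notMem.1 hnull)]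
      with ω hω
    rintro _ ⟨a, ha, c, hc, rfl⟩
    by_contra hac
    exact hω ⟨(φ ω, a, c), ⟨ha, hc, hac⟩, rfl⟩
  refine le_antisymm (ENNReal.le_of_forall_pos_le_add fun ε hε _ => ?_) (by simp)
  obtain ⟨C, hCB, hC, hle⟩ := hB.analyticSet.exists_isCompact_subset_measure_image_le (P.map φ)
    continuous_fst (ENNReal.coe_ne_zero.2 hε.ne')
  have hCsum : ∀ k, Prod.mk k ⁻¹' (sum '' C) ⊆ Prod.mk k ⁻¹' G₁ + Prod.mk k ⁻¹' G₂ := by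
    rintro k _ ⟨q, hq, hqk⟩
    obtain ⟨h₁, h₂, -⟩ := hCB hq
    obtain ⟨rfl, rfl⟩ := Prod.mk.inj hqk
    exact add_mem_add h₁ h₂
  have hCnull : P.map φ (Prod.fst '' C) = 0 := by
    rw [Measure.map_apply hφ (hC.image continuous_fst).measurableSet,
      measure_eq_zero_iff_ae_notMem]
    filter_upwards [h _ (hC.image hsum) hCsum] with ω hω
    rintro ⟨q, hq, hqω⟩
    exact (hCB hq).2.2 (hqω ▸ hω ⟨q, hq, by simp [sum, hqω]⟩)
  simpa [hCnull] using hle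

section CondCore

variable {Ω X : Type*} [MeasurableSpace X] {mF mH : MeasurableSpace Ω} {P : @Measure Ω mF}

lemma IsCondCoreGen.ae_eq {C Z₁ Z₂ : Ω → Set X} (h₁ : IsCondCoreGen mF mH P C Z₁)
    (h₂ : IsCondCoreGen mF mH P C Z₂) : ∀ᵐ ω ∂P, Z₁ ω = Z₂ ω := by
  filter_upwards [h₂.2.2 Z₁ h₁.1 h₁.2.1, h₁.2.2 Z₂ h₂.1 h₂.2.1] with ω h₁₂ h₂₁
  exact h₁₂.antisymm h₂₁

lemma measurableSet_add_singleton [AddGroup X] [MeasurableAdd₂ X] [MeasurableNeg X]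
    {Z : Ω → Set X} (hZ : MeasurableSet[mH.prod inferInstance] {p : Ω × X | p.2 ∈ Z p.1})
    {η : Ω → X} (hη : Measurable[mH] η) :
    MeasurableSet[mH.prod inferInstance] {p : Ω × X | p.2 ∈ Z p.1 + {η p.1}} := by
  have : {p : Ω × X | p.2 ∈ Z p.1 + {η p.1}} =
      (fun p => (p.1, p.2 + -η p.1)) ⁻¹' {p : Ω × X | p.2 ∈ Z p.1} := by
    ext p
    simp [Set.add_singleton, Set.image_add_right]
  rw [this]
  exact (measurable_fst.prodMk (measurable_snd.add (hη.comp measurable_fst).neg)) hZ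

lemma IsCondCoreGen.add_singleton [AddGroup X] [MeasurableAdd₂ X] [MeasurableNeg X]
    {C Z : Ω → Set X} (hZ : IsCondCoreGen mF mH P C Z) {η : Ω → X} (hη : Measurable[mH] η) :
    IsCondCoreGen mF mH P (fun ω => C ω + {η ω}) (fun ω => Z ω + {η ω}) := by
  have cancel : ∀ (A : Set X) {a b : X}, a + b = 0 → A + {a} + {b} = A := fun A a b hab => by
    rw [add_assoc, Set.singleton_add_singleton, hab, Set.singleton_zero, add_zero]
  refine ⟨measurableSet_add_singleton hZ.1 hη,
    hZ.2.1.mono fun ω h => Set.add_subset_add_right h, fun W hW hWC => ?_⟩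
  have hWZ := hZ.2.2 (fun ω => W ω + {-η ω}) (measurableSet_add_singleton hW hη.neg)
    (hWC.mono fun ω h => cancel (C ω) (add_neg_cancel (η ω)) ▸ Set.add_subset_add_right h)
  filter_upwards [hWZ] with ω h
  calc W ω = W ω + {-η ω} + {η ω} := (cancel (W ω) (neg_add_cancel (η ω))).symm
    _ ⊆ Z ω + {η ω} := Set.add_subset_add_right h

lemma IsCondCoreGen.ae_add_subset [TopologicalSpace X] [PolishSpace X] [BorelSpace X] [Add X]
    [ContinuousAdd X] [IsFiniteMeasure P] (hH : mH ≤ mF) {C ZS : Ω → Set X}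
    (hS : IsCondCoreGen mF mH P C ZS) {ZX ZY : Ω → Set X}
    (hZX : MeasurableSet[mH.prod inferInstance] {p : Ω × X | p.2 ∈ ZX p.1})
    (hZY : MeasurableSet[mH.prod inferInstance] {p : Ω × X | p.2 ∈ ZY p.1})
    (hC : ∀ᵐ ω ∂P, ZX ω + ZY ω ⊆ C ω) : ∀ᵐ ω ∂P, ZX ω + ZY ω ⊆ ZS ω := by
  obtain ⟨b₁, hb₁, hb₁H, hZX⟩ := exists_countable_measurableSet_generateFrom_prod hZX
  obtain ⟨b₂, hb₂, hb₂H, hZY⟩ := exists_countable_measurableSet_generateFrom_prod hZY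
  obtain ⟨b₃, hb₃, hb₃H, hZS⟩ := exists_countable_measurableSet_generateFrom_prod hS.1
  let b := b₁ ∪ b₂ ∪ b₃
  have : Countable b := ((hb₁.union hb₂).union hb₃).to_subtype
  have hbH : ∀ s ∈ b, MeasurableSet[mH] s := by
    rintro s ((hs | hs) | hs)
    exacts [hb₁H s hs, hb₂H s hs, hb₃H s hs]
  have hb : ∀ {b'}, b' ⊆ b → (MeasurableSpace.generateFrom b').prod inferInstance ≤
      (MeasurableSpace.generateFrom b).prod (inferInstance : MeasurableSpace X) := fun h =>
    MeasurableSpace.prod_mono_left (MeasurableSpace.generateFrom_mono h)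
  obtain ⟨G₁, hG₁, eX⟩ := exists_measurableSet_eq_preimage_indicatorVector
    (hb (subset_union_left.trans subset_union_left) _ hZX)
  obtain ⟨G₂, hG₂, eY⟩ := exists_measurableSet_eq_preimage_indicatorVector
    (hb (subset_union_right.trans subset_union_left) _ hZY)
  obtain ⟨G₃, hG₃, eS⟩ := exists_measurableSet_eq_preimage_indicatorVector
    (hb subset_union_right _ hZS)
  have hφ := measurable_indicatorVector hbH
  have key := ae_prodMk_preimage_add_subset P (hφ.mono hH le_rfl) hG₁ hG₂ hG₃ fun L hL hLG => by
    let W : Ω → Set X := fun ω => Prod.mk (indicatorVector b ω) ⁻¹' L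
    have hW : MeasurableSet[mH.prod inferInstance] {p : Ω × X | p.2 ∈ W p.1} :=
      hφ.prodMap measurable_id hL.isClosed.measurableSet
    have hWC : ∀ᵐ ω ∂P, W ω ⊆ C ω := by
      filter_upwards [hC] with ω hω
      exact (hLG _).trans (eX ω ▸ eY ω ▸ hω)
    filter_upwards [hS.2.2 W hW hWC] with ω hω
    exact eS ω ▸ hω
  filter_upwards [key] with ω hω
  rwa [eX, eY, eS]

end CondCore

theorem stmt15_general {Ω X : Type*} [mF : MeasurableSpace Ω] [NormedAddCommGroup X]
    [CompleteSpace X] [TopologicalSpace.SeparableSpace X]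
    [MeasurableSpace X] [BorelSpace X]
    (P : Measure Ω) [IsProbabilityMeasure P]
    (mH : MeasurableSpace Ω) (hH : mH ≤ mF) :
    (∀ CX CY ZX ZY ZS : Ω → Set X,
      IsCondCoreGen mF mH P CX ZX → IsCondCoreGen mF mH P CY ZY →
      IsCondCoreGen mF mH P (fun ω => CX ω + CY ω) ZS →
      ∀ᵐ ω ∂P, ZX ω + ZY ω ⊆ ZS ω) ∧
    (∀ C : Ω → Set X, (∀ ω, IsClosed (C ω)) →
      MeasurableSet {p : Ω × X | p.2 ∈ C p.1} →
      ∀ η : Ω → X, Measurable[mH] η →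
        ∀ Z ZS : Ω → Set X, IsCondCoreGen mF mH P C Z →
          IsCondCoreGen mF mH P (fun ω => C ω + {η ω}) ZS →
          ∀ᵐ ω ∂P, ZS ω = Z ω + {η ω}) := by
  refine ⟨fun CX CY ZX ZY ZS hX hY hS => ?_, fun C _ _ η hη Z ZS hZ hZS => ?_⟩
  · refine hS.ae_add_subset hH hX.1 hY.1 ?_
    filter_upwards [hX.2.1, hY.2.1] with ω hXω hYω
    exact Set.add_subset_add hXω hYω
  · exact hZS.ae_eq (hZ.add_singleton hη)

/-- Lemma 4.7 and Lemma 4.9: subadditivity of the conditional core,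
m(X|H) + m(Y|H) ⊆ m(X+Y|H) a.s., and equality m(X+{η}|H) = m(X|H)+η for an
H-measurable singleton summand. -/
theorem stmt15 {Ω X : Type*} [mF : MeasurableSpace Ω] [NormedAddCommGroup X]
    [NormedSpace ℝ X] [CompleteSpace X] [TopologicalSpace.SeparableSpace X]
    [MeasurableSpace X] [BorelSpace X]
    (P : Measure Ω) [IsProbabilityMeasure P] (hPc : P.IsComplete)
    (mH : MeasurableSpace Ω) (hH : mH ≤ mF) :
    (∀ CX CY ZX ZY ZS : Ω → Set X,
      IsCondCoreGen mF mH P CX ZX → IsCondCoreGen mF mH P CY ZY →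
      IsCondCoreGen mF mH P (fun ω => CX ω + CY ω) ZS →
      ∀ᵐ ω ∂P, ZX ω + ZY ω ⊆ ZS ω) ∧
    (∀ C : Ω → Set X, (∀ ω, IsClosed (C ω)) →
      MeasurableSet {p : Ω × X | p.2 ∈ C p.1} →
      ∀ η : Ω → X, Measurable[mH] η →
        ∀ Z ZS : Ω → Set X, IsCondCoreGen mF mH P C Z →
          IsCondCoreGen mF mH P (fun ω => C ω + {η ω}) ZS →
          ∀ᵐ ω ∂P, ZS ω = Z ω + {η ω}) :=
  stmt15_general (mF := mF) P mH hH
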